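/- arXiv:2404.14178 — 5 statements merged into one kernel-verified Lean document; each statement's English description precedes it below -/
import Mathlib

section
/- For every n > r ≥ 2, any r-wise 1-agreeing family F ⊆ 2^[n] satisfies |F| ≤ 2^(n-1), and this bound is attained by the family of all subsets of [n] not containing the element 1. -/
open Finset

/-- The set of coordinates on which the sets `f 0, ..., f (r-1)` all agree. -/
def agreeSet {n r : ℕ} (f : Fin r → Finset (Fin n)) : Finset (Fin n) :=
  Finset.univ.filter (fun x => (∀ i, x ∈ f i) ∨ (∀ i, x ∉ f i))

/-- `F` is `r`-wise `t`-agreeing. -/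
def AgreeingFamily (n r t : ℕ) (F : Finset (Finset (Fin n))) : Prop :=
  ∀ f : Fin r → Finset (Fin n), (∀ i, f i ∈ F) → t ≤ (agreeSet f).card

theorem stmt2 (n r : ℕ) (hr : 2 ≤ r) (hrn : r < n) :
    (∀ F : Finset (Finset (Fin n)), AgreeingFamily n r 1 F → F.card ≤ 2 ^ (n - 1)) ∧
    AgreeingFamily n r 1
      (Finset.univ.filter (fun A : Finset (Fin n) => (⟨0, by omega⟩ : Fin n) ∉ A)) ∧
    (Finset.univ.filter (fun A : Finset (Fin n) => (⟨0, by omega⟩ : Fin n) ∉ A)).card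
      = 2 ^ (n - 1) := by
  have hn : 1 ≤ n := by omega
  refine ⟨?_, ?_, ?_⟩
  · intro F hF
    have hdisj : Disjoint F (F.image compl) := by
      rw [Finset.disjoint_left]
      intro A hA hA'
      obtain ⟨B, hB, rfl⟩ := Finset.mem_image.mp hA'
      set f : Fin r → Finset (Fin n) := fun i => if (i : ℕ) = 0 then B else Bᶜ with hf
      have h1 := hF f (by
        intro i
        simp only [hf]
        split
        · exact hB
        · exact hA)
      obtain ⟨x, hx⟩ := Finset.one_le_card.mp h1
      simp only [agreeSet, Finset.mem_filter] at hx
      rcases hx.2 with h | h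
      · have h0 := h ⟨0, by omega⟩
        have h1' := h ⟨1, by omega⟩
        simp [hf] at h0 h1'
        exact h1' h0
      · have h0 := h ⟨0, by omega⟩
        have h1' := h ⟨1, by omega⟩
        simp [hf] at h0 h1'
        exact h0 h1'
    have hcard : (F ∪ F.image compl).card ≤ 2 ^ n := by
      calc (F ∪ F.image compl).card ≤ Fintype.card (Finset (Fin n)) :=
            Finset.card_le_univ _
        _ = 2 ^ n := by simp
    rw [Finset.card_union_of_disjoint hdisj,
      Finset.card_image_of_injective _ compl_injective] at hcard
    have : 2 ^ n = 2 * 2 ^ (n - 1) := by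
      rw [← pow_succ']
      congr 1
      omega
    omega
  · intro f hf
    have hx : (⟨0, by omega⟩ : Fin n) ∈ agreeSet f := by
      rw [agreeSet, Finset.mem_filter]
      refine ⟨Finset.mem_univ _, Or.inr fun i => ?_⟩
      have := hf i
      rw [Finset.mem_filter] at this
      exact this.2
    exact Finset.card_pos.mpr ⟨_, hx⟩
  · have : (Finset.univ.filter (fun A : Finset (Fin n) => (⟨0, by omega⟩ : Fin n) ∉ A))
        = ({(⟨0, by omega⟩ : Fin n)}ᶜ : Finset (Fin n)).powerset := by
      ext A
      simp [Finset.subset_compl_comm, Finset.singleton_subset_iff, Finset.mem_compl]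
    rw [this, Finset.card_powerset, Finset.card_compl]
    simp
end

section
/- The family B = {B ⊆ [n] : |B ∩ [r+t]| ≤ 1}, where n > r+t, is non-trivial and r-wise t-agreeing, and has size (r+t+1)·2^(n-r-t). -/
open Finset

def NonTrivialFamily (n : ℕ) (F : Finset (Finset (Fin n))) : Prop :=
  (∀ x : Fin n, ∃ A ∈ F, x ∉ A) ∧ (∀ x : Fin n, ∃ A ∈ F, x ∈ A)

/-- `{1, ..., r+t}` viewed inside `Fin n`: the first `r + t` coordinates. -/
def firstCoords (n m : ℕ) : Finset (Fin n) :=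
  Finset.univ.filter (fun x => (x : ℕ) < m)

/-
Every member of the family meets `S = [r+t]` in at most one point, so `r` members together cover
at most `r` points of `S`, and the remaining `t` points of `S` are avoided by all of them.
A set in the family is a subset of `S` of size at most one (there are `r + t + 1` of these)
together with an arbitrary subset of the complement of `S`.
-/

theorem card_firstCoords {n m : ℕ} (hm : m ≤ n) : #(firstCoords n m) = m := by
  rw [firstCoords, Fin.card_filter_val_lt, min_eq_right hm]

theorem nonTrivialFamily_filter_card_inter_le_one {n : ℕ} (S : Finset (Fin n)) :
    NonTrivialFamily n {B | #(B ∩ S) ≤ 1} := by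
  refine ⟨fun x => ⟨∅, by simp, by simp⟩, fun x => ⟨{x}, ?_, mem_singleton_self x⟩⟩
  simpa using (card_le_card inter_subset_left).trans (card_singleton x).le

theorem card_sub_le_card_agreeSet {n r : ℕ} {S : Finset (Fin n)} (f : Fin r → Finset (Fin n))
    (hf : ∀ i, #(f i ∩ S) ≤ 1) : #S - r ≤ #(agreeSet f) := by
  set V := univ.biUnion fun i => f i ∩ S
  have hV : #V ≤ r := by
    calc #V ≤ ∑ i, #(f i ∩ S) := card_biUnion_le
      _ ≤ ∑ _i : Fin r, 1 := sum_le_sum fun i _ => hf i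
      _ = r := by simp
  have hsub : S \ V ⊆ agreeSet f := by
    intro x hx
    simp only [V, mem_sdiff, mem_biUnion, mem_univ, true_and, mem_inter, not_exists,
      not_and] at hx
    simp only [agreeSet, mem_filter, mem_univ, true_and]
    exact Or.inr fun i hi => hx.2 i hi hx.1
  calc #S - r ≤ #S - #V := Nat.sub_le_sub_left hV _
    _ ≤ #(S \ V) := le_card_sdiff V S
    _ ≤ #(agreeSet f) := card_le_card hsub

theorem agreeingFamily_filter_card_inter_le_one {n r t : ℕ} {S : Finset (Fin n)}
    (hS : r + t ≤ #S) : AgreeingFamily n r t {B | #(B ∩ S) ≤ 1} := by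
  intro f hf
  have := card_sub_le_card_agreeSet f fun i => by simpa using hf i
  omega

theorem card_filter_card_le_one_powerset {α : Type*} [DecidableEq α] (S : Finset α) :
    #{A ∈ S.powerset | #A ≤ 1} = #S + 1 := by
  have : {A ∈ S.powerset | #A ≤ 1} = insert ∅ (S.map ⟨singleton, singleton_injective⟩) := by
    ext A
    simp only [mem_filter, mem_powerset, mem_insert, mem_map, Function.Embedding.coeFn_mk]
    constructor
    · rintro ⟨hAS, hA⟩
      rcases Nat.le_one_iff_eq_zero_or_eq_one.mp hA with hA0 | hA1
      · exact Or.inl (card_eq_zero.mp hA0)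
      · obtain ⟨a, rfl⟩ := card_eq_one.mp hA1
        exact Or.inr ⟨a, singleton_subset_iff.mp hAS, rfl⟩
    · rintro (rfl | ⟨a, ha, rfl⟩) <;> simp_all
  rw [this, card_insert_of_notMem fun h => by simp [eq_comm] at h, card_map]

theorem union_inter_eq_and_union_sdiff_eq {α : Type*} [Fintype α] [DecidableEq α]
    {S A C : Finset α} (hA : A ⊆ S) (hC : C ⊆ Sᶜ) : (A ∪ C) ∩ S = A ∧ (A ∪ C) \ S = C := by
  have hCS : Disjoint C S := subset_compl_iff_disjoint_right.mp hC
  constructor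
  · rw [union_inter_distrib_right, inter_eq_left.mpr hA, disjoint_iff_inter_eq_empty.mp hCS,
      union_empty]
  · rw [union_sdiff_distrib, sdiff_eq_empty_iff_subset.mpr hA, empty_union, hCS.sdiff_eq_left]

theorem card_filter_inter {α : Type*} [Fintype α] [DecidableEq α] (S : Finset α)
    (P : Finset α → Prop) [DecidablePred P] :
    #{B : Finset α | P (B ∩ S)} = #{A ∈ S.powerset | P A} * 2 ^ #Sᶜ := by
  rw [← card_powerset Sᶜ, ← card_product]
  refine card_nbij' (fun B => (B ∩ S, B \ S)) (fun p => p.1 ∪ p.2) ?_ ?_ ?_ ?_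
  · intro B hB
    simp_all [sdiff_eq_inter_compl]
  · rintro ⟨A, C⟩ hp
    simp only [coe_product, coe_filter, mem_powerset, Set.mem_prod, Set.mem_ofPred_eq,
      mem_coe] at hp
    simp [(union_inter_eq_and_union_sdiff_eq hp.1.1 hp.2).1, hp.1.2]
  · intro B _
    exact sup_inf_sdiff B S
  · rintro ⟨A, C⟩ hp
    simp only [coe_product, coe_filter, mem_powerset, Set.mem_prod, Set.mem_ofPred_eq,
      mem_coe] at hp
    obtain ⟨h1, h2⟩ := union_inter_eq_and_union_sdiff_eq hp.1.1 hp.2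
    simp [h1, h2]

theorem stmt3 (n r t : ℕ) (h : r + t < n) :
    NonTrivialFamily n
      (Finset.univ.filter (fun B : Finset (Fin n) => (B ∩ firstCoords n (r + t)).card ≤ 1)) ∧
    AgreeingFamily n r t
      (Finset.univ.filter (fun B : Finset (Fin n) => (B ∩ firstCoords n (r + t)).card ≤ 1)) ∧
    (Finset.univ.filter (fun B : Finset (Fin n) => (B ∩ firstCoords n (r + t)).card ≤ 1)).card
      = (r + t + 1) * 2 ^ (n - r - t) := by
  have hS := card_firstCoords (n := n) h.le
  refine ⟨nonTrivialFamily_filter_card_inter_le_one _,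
    agreeingFamily_filter_card_inter_le_one hS.ge, ?_⟩
  rw [card_filter_inter _ fun A => #A ≤ 1, card_filter_card_le_one_powerset, card_compl, hS,
    Fintype.card_fin, Nat.sub_sub]
end

section
/- Let F ⊆ 2^[n], i ∈ [n], and G = S_i(F) the squash of F at i. Then max over G₁,...,G_r ∈ G of |W(G₁,...,G_r)| is at most max over F₁,...,F_r ∈ F of |W(F₁,...,F_r)|, where W(A₁,...,A_r) = (A₁∪...∪A_r) \ (A₁∩...∩A_r). -/
open Finset

/-- The squash `S_i(F)`: a set `A` containing `i` is in the squash iff both `A` and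
`A.erase i` are in `F`; a set `A` not containing `i` is in the squash iff `A ∈ F` or
`insert i A ∈ F`.  Equivalently, `G(i) = F(i) ∩ F(ī)` and `G(ī) = F(i) ∪ F(ī)`. -/
def squash {n : ℕ} (i : Fin n) (F : Finset (Finset (Fin n))) : Finset (Finset (Fin n)) :=
  Finset.univ.filter (fun A =>
    (i ∈ A ∧ A ∈ F ∧ A.erase i ∈ F) ∨ (i ∉ A ∧ (A ∈ F ∨ insert i A ∈ F)))

/-- `W (f 0, ..., f (r-1))` : the set of coordinates on which not all the sets agree,
i.e. `(f 0 ∪ ... ∪ f (r-1)) \ (f 0 ∩ ... ∩ f (r-1))`. -/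
def W {n r : ℕ} (f : Fin r → Finset (Fin n)) : Finset (Fin n) :=
  (Finset.univ.biUnion f) \ (Finset.univ.filter (fun x => ∀ i, x ∈ f i))

theorem stmt7 (n r : ℕ) (i : Fin n) (F : Finset (Finset (Fin n)))
    (g : Fin r → Finset (Fin n)) (hg : ∀ j, g j ∈ squash i F) :
    ∃ f : Fin r → Finset (Fin n), (∀ j, f j ∈ F) ∧ (W g).card ≤ (W f).card := by
  have hsq : ∀ j, (i ∈ g j ∧ g j ∈ F ∧ (g j).erase i ∈ F) ∨
      (i ∉ g j ∧ (g j ∈ F ∨ insert i (g j) ∈ F)) := by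
    intro j
    have := hg j
    simpa [squash] using this
  by_cases hA : ∀ j, i ∉ g j → g j ∈ F
  · refine ⟨g, ?_, le_rfl⟩
    intro j
    rcases hsq j with ⟨h1, h2, _⟩ | ⟨h1, h2⟩
    · exact h2
    · exact hA j h1
  · push_neg at hA
    obtain ⟨j₁, hj₁i, hj₁F⟩ := hA
    set f : Fin r → Finset (Fin n) := fun j =>
      if i ∈ g j then (g j).erase i else if g j ∈ F then g j else insert i (g j) with hf
    have hmemx : ∀ (x : Fin n), x ≠ i → ∀ j, (x ∈ f j ↔ x ∈ g j) := by
      intro x hx j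
      simp only [hf]
      split_ifs with h1 h2 <;> simp [mem_erase, mem_insert, hx]
    have hsub : W g ⊆ W f := by
      intro x hx
      simp only [W, mem_sdiff, mem_biUnion, mem_filter, mem_univ, true_and] at hx ⊢
      by_cases hxi : x = i
      · subst hxi
        obtain ⟨⟨j₀, hj₀⟩, hni⟩ := hx
        refine ⟨⟨j₁, ?_⟩, ?_⟩
        · simp [hf, hj₁i, hj₁F]
        · intro hall
          have := hall j₀
          simp [hf, hj₀] at this
      · obtain ⟨⟨j₀, hj₀⟩, hni⟩ := hx
        refine ⟨⟨j₀, (hmemx x hxi j₀).mpr hj₀⟩, ?_⟩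
        intro hall
        exact hni (fun j => (hmemx x hxi j).mp (hall j))
    refine ⟨f, ?_, card_le_card hsub⟩
    intro j
    rcases hsq j with ⟨h1, h2, h3⟩ | ⟨h1, h2⟩
    · simpa [hf, h1] using h3
    · by_cases hgF : g j ∈ F
      · simp [hf, h1, hgF]
      · rcases h2 with h2 | h2
        · exact absurd h2 hgF
        · simp [hf, h1, hgF, h2]
end

section
/- Squashing preserves the r-wise t-agreeing property: if F ⊆ 2^[n] is r-wise t-agreeing and i ∈ [n], then S_i(F) is r-wise t-agreeing. -/
open Finset

lemma agree_sub {n r : ℕ} (i : Fin n) (f g : Fin r → Finset (Fin n))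
    (hx : ∀ j x, x ≠ i → (x ∈ g j ↔ x ∈ f j))
    (hi : i ∈ agreeSet g → i ∈ agreeSet f) :
    agreeSet g ⊆ agreeSet f := by
  intro x hxg
  by_cases hxi : x = i
  · subst hxi; exact hi hxg
  · simp only [agreeSet, mem_filter, mem_univ, true_and] at hxg ⊢
    rcases hxg with hc | hc
    · exact Or.inl fun j => (hx j x hxi).mp (hc j)
    · exact Or.inr fun j hm => hc j ((hx j x hxi).mpr hm)

theorem stmt8 (n r t : ℕ) (i : Fin n) (F : Finset (Finset (Fin n)))
    (h : AgreeingFamily n r t F) : AgreeingFamily n r t (squash i F) := by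
  intro f hf
  have hsq : ∀ j, (i ∈ f j ∧ f j ∈ F ∧ (f j).erase i ∈ F) ∨
      (i ∉ f j ∧ (f j ∈ F ∨ insert i (f j) ∈ F)) := by
    intro j
    have := hf j
    simpa [squash] using this
  have key : ∀ g : Fin r → Finset (Fin n), (∀ j, g j ∈ F) →
      (∀ j x, x ≠ i → (x ∈ g j ↔ x ∈ f j)) →
      (i ∈ agreeSet g → i ∈ agreeSet f) → t ≤ (agreeSet f).card := by
    intro g hg hx hi
    calc t ≤ (agreeSet g).card := h g hg
      _ ≤ (agreeSet f).card := Finset.card_le_card (agree_sub i f g hx hi)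
  by_cases hA : i ∈ agreeSet f
  · -- i agrees already; keep sets (fixing membership in F where needed)
    refine key (fun j => if i ∈ f j then f j else if f j ∈ F then f j else insert i (f j))
      ?_ ?_ (fun _ => hA)
    · intro j
      rcases hsq j with ⟨h1, h2, _⟩ | ⟨h1, h2⟩
      · simp [h1, h2]
      · by_cases h3 : f j ∈ F
        · simp [h1, h3]
        · simpa [h1, h3] using h2.resolve_left h3
    · intro j x hxi
      by_cases h1 : i ∈ f j <;> [skip; by_cases h3 : f j ∈ F] <;>
        simp [h1, *, Finset.mem_insert, hxi]
  · have hA' : (∃ j, i ∉ f j) ∧ (∃ j, i ∈ f j) := by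
      simp only [agreeSet, mem_filter, mem_univ, true_and] at hA
      push_neg at hA
      obtain ⟨h1, h2⟩ := hA
      exact ⟨by simpa using h1, by simpa using h2⟩
    obtain ⟨⟨k₀, hk₀⟩, ⟨j₀, hj₀⟩⟩ := hA'
    by_cases hB : ∃ k, i ∉ f k ∧ f k ∈ F
    · obtain ⟨k₁, hk₁, hk₁F⟩ := hB
      set g : Fin r → Finset (Fin n) :=
        fun j => if i ∈ f j then f j else if f j ∈ F then f j else insert i (f j) with hgdef
      refine key g ?_ ?_ ?_
      · intro j
        rcases hsq j with ⟨h1, h2, _⟩ | ⟨h1, h2⟩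
        · simp [hgdef, h1, h2]
        · by_cases h3 : f j ∈ F
          · simp [hgdef, h1, h3]
          · simpa [hgdef, h1, h3] using h2.resolve_left h3
      · intro j x hxi
        by_cases h1 : i ∈ f j <;> [skip; by_cases h3 : f j ∈ F] <;>
          simp [hgdef, h1, *, Finset.mem_insert, hxi]
      · intro hig
        exfalso
        simp only [agreeSet, mem_filter, mem_univ, true_and] at hig
        rcases hig with hc | hc
        · have := hc k₁
          simp [hgdef, hk₁, hk₁F] at this
        · have := hc j₀
          simp [hgdef, hj₀] at this
    · push_neg at hB
      set g : Fin r → Finset (Fin n) :=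
        fun j => if i ∈ f j then (f j).erase i else insert i (f j) with hgdef
      refine key g ?_ ?_ ?_
      · intro j
        rcases hsq j with ⟨h1, _, h3⟩ | ⟨h1, h2⟩
        · simp [hgdef, h1, h3]
        · have := h2.resolve_left (hB j h1)
          simp [hgdef, h1, this]
      · intro j x hxi
        by_cases h1 : i ∈ f j <;>
          simp [hgdef, h1, Finset.mem_insert, Finset.mem_erase, hxi]
      · intro hig
        exfalso
        simp only [agreeSet, mem_filter, mem_univ, true_and] at hig
        rcases hig with hc | hc
        · have := hc j₀
          simp [hgdef, hj₀] at this
        · have := hc k₀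
          simp [hgdef, hk₀] at this
end

section
/- Let F ⊆ 2^[n] be a non-trivial r-wise 1-agreeing family with r ≥ 3, and for j ∈ [n] let F_j = {F \ {j} : F ∈ F} ⊆ 2^([n]\{j}). Then F_j is a non-trivial (r-1)-wise 1-agreeing family on the ground set [n]\{j}. -/
open Finset

/-- On the ground set `[n] \ {j}`, non-triviality and agreeing restrict the coordinates
to those different from `j`. Here `F_j = {F \ {j} : F ∈ F}`. -/
theorem stmt10 (n r : ℕ) (hr : 3 ≤ r) (j : Fin n) (F : Finset (Finset (Fin n)))
    (hnt : NonTrivialFamily n F) (hag : AgreeingFamily n r 1 F) :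
    (∀ x : Fin n, x ≠ j → ∃ A ∈ F.image (fun A => A.erase j), x ∉ A) ∧
    (∀ x : Fin n, x ≠ j → ∃ A ∈ F.image (fun A => A.erase j), x ∈ A) ∧
    (∀ f : Fin (r - 1) → Finset (Fin n), (∀ i, f i ∈ F.image (fun A => A.erase j)) →
      1 ≤ ((Finset.univ.erase j).filter
        (fun x => (∀ i, x ∈ f i) ∨ (∀ i, x ∉ f i))).card) := by
  obtain ⟨hnt1, hnt2⟩ := hnt
  refine ⟨?_, ?_, ?_⟩
  · intro x hx
    obtain ⟨A, hA, hxA⟩ := hnt1 x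
    exact ⟨A.erase j, Finset.mem_image_of_mem _ hA,
      fun h => hxA (Finset.mem_of_mem_erase h)⟩
  · intro x hx
    obtain ⟨A, hA, hxA⟩ := hnt2 x
    exact ⟨A.erase j, Finset.mem_image_of_mem _ hA, Finset.mem_erase.mpr ⟨hx, hxA⟩⟩
  · intro f hf
    have hex : ∀ i, ∃ A, A ∈ F ∧ A.erase j = f i := by
      intro i
      obtain ⟨A, hA, hAe⟩ := Finset.mem_image.mp (hf i)
      exact ⟨A, hA, hAe⟩
    choose A hAF hAe using hex
    obtain ⟨B, hB, hjB⟩ := hnt1 j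
    obtain ⟨C, hC, hjC⟩ := hnt2 j
    have hr1 : r - 1 < r := by omega
    have hkey : ∀ x : Fin n, x ≠ j →
        ((∀ i, x ∈ A i) ∨ (∀ i, x ∉ A i)) →
        1 ≤ ((Finset.univ.erase j).filter
          (fun x => (∀ i, x ∈ f i) ∨ (∀ i, x ∉ f i))).card := by
      intro x hxj hx
      refine Finset.card_pos.mpr ⟨x, Finset.mem_filter.mpr
        ⟨Finset.mem_erase.mpr ⟨hxj, Finset.mem_univ x⟩, ?_⟩⟩
      rcases hx with h | h
      · exact Or.inl fun i => (hAe i) ▸ Finset.mem_erase.mpr ⟨hxj, h i⟩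
      · exact Or.inr fun i hxi => h i (Finset.mem_of_mem_erase ((hAe i) ▸ hxi))
    set g : Fin r → Finset (Fin n) :=
      fun i => if h : (i : ℕ) < r - 1 then A ⟨i, h⟩ else B with hg
    have hgF : ∀ i, g i ∈ F := by
      intro i
      simp only [hg]
      split
      · exact hAF _
      · exact hB
    obtain ⟨x, hx⟩ := Finset.card_pos.mp (lt_of_lt_of_le one_pos (hag g hgF))
    have hgA : ∀ i : Fin (r - 1), g ⟨i, lt_trans i.2 hr1⟩ = A i := by
      intro i
      simp only [hg]
      rw [dif_pos i.2]
    have hgB : g ⟨r - 1, hr1⟩ = B := by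
      simp only [hg]
      rw [dif_neg (lt_irrefl _)]
    simp only [agreeSet, Finset.mem_filter] at hx
    rcases hx.2 with h | h
    · -- x in all, in particular x ∈ B so x ≠ j
      have hxj : x ≠ j := fun e => hjB (e ▸ (hgB ▸ h ⟨r - 1, hr1⟩))
      exact hkey x hxj (Or.inl fun i => hgA i ▸ h ⟨i, lt_trans i.2 hr1⟩)
    · have hxA : ∀ i, x ∉ A i := fun i => hgA i ▸ h ⟨i, lt_trans i.2 hr1⟩
      by_cases hxj : x = j
      · -- j ∉ A i for all i; use C
        have hjA : ∀ i, j ∉ A i := fun i => hxj ▸ hxA i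
        set g2 : Fin r → Finset (Fin n) :=
          fun i => if h : (i : ℕ) < r - 1 then A ⟨i, h⟩ else C with hg2
        have hg2F : ∀ i, g2 i ∈ F := by
          intro i
          simp only [hg2]
          split
          · exact hAF _
          · exact hC
        obtain ⟨y, hy⟩ := Finset.card_pos.mp (lt_of_lt_of_le one_pos (hag g2 hg2F))
        have hg2A : ∀ i : Fin (r - 1), g2 ⟨i, lt_trans i.2 hr1⟩ = A i := by
          intro i
          simp only [hg2]
          rw [dif_pos i.2]
        have hg2C : g2 ⟨r - 1, hr1⟩ = C := by
          simp only [hg2]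
          rw [dif_neg (lt_irrefl _)]
        simp only [agreeSet, Finset.mem_filter] at hy
        have h0 : (0 : ℕ) < r - 1 := by omega
        rcases hy.2 with h' | h'
        · have hyA : ∀ i, y ∈ A i := fun i => hg2A i ▸ h' ⟨i, lt_trans i.2 hr1⟩
          have hyj : y ≠ j := fun e => hjA ⟨0, h0⟩ (e ▸ hyA ⟨0, h0⟩)
          exact hkey y hyj (Or.inl hyA)
        · have hyj : y ≠ j := fun e => (hg2C ▸ h' ⟨r - 1, hr1⟩) (e ▸ hjC)
          exact hkey y hyj (Or.inr fun i => hg2A i ▸ h' ⟨i, lt_trans i.2 hr1⟩)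
      · exact hkey x hxj (Or.inr hxA)
end
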